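/- Let γ ∈ [0,1) and p ∈ (0,1), and define the pure input states χ₊(p) = [[1−p, √(p(1−p))], [√(p(1−p)), p]] and χ₋(p) = [[1−p, −√(p(1−p))], [−√(p(1−p)), p]]. Then for every two-outcome POVM (Λ₀, Λ₁) on ℂ², the average success probability satisfies (1/2)·Re Tr(Λ₀ · N_γ(χ₊(p))) + (1/2)·Re Tr(Λ₁ · N_γ(χ₋(p))) ≤ 1/2 + √((1−γ)·p·(1−p)); and if p ≠ 1/2, then 1/2 + √((1−γ)·p·(1−p)) < (1 + √(1−γ))/2, so the Holevo-χ-capacity-achieving input states are strictly suboptimal for the average success probability of the single-use ADC. -/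

import Mathlib

open Matrix Complex
open scoped ComplexOrder

/-- Kraus operator `K₀` of the qubit amplitude damping channel. -/
noncomputable def K₀ (γ : ℝ) : Matrix (Fin 2) (Fin 2) ℂ :=
  !![1, 0; 0, (Real.sqrt (1 - γ) : ℂ)]

/-- Kraus operator `K₁` of the qubit amplitude damping channel. -/
noncomputable def K₁ (γ : ℝ) : Matrix (Fin 2) (Fin 2) ℂ :=
  !![0, (Real.sqrt γ : ℂ); 0, 0]

/-- The qubit amplitude damping channel with damping parameter `γ`. -/
noncomputable def ADC (γ : ℝ) (ρ : Matrix (Fin 2) (Fin 2) ℂ) : Matrix (Fin 2) (Fin 2) ℂ :=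
  K₀ γ * ρ * (K₀ γ)ᴴ + K₁ γ * ρ * (K₁ γ)ᴴ

/-- The state `ρ₊ = |+⟩⟨+|`. -/
noncomputable def ρPlus : Matrix (Fin 2) (Fin 2) ℂ := (1/2 : ℂ) • !![1, 1; 1, 1]

/-- The state `ρ₋ = |−⟩⟨−|`. -/
noncomputable def ρMinus : Matrix (Fin 2) (Fin 2) ℂ := (1/2 : ℂ) • !![1, -1; -1, 1]

/-- The Holevo-χ-capacity–achieving pure input state `χ₊(p)`. -/
noncomputable def χPlus (p : ℝ) : Matrix (Fin 2) (Fin 2) ℂ :=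
  !![(1 - p : ℂ), (Real.sqrt (p * (1 - p)) : ℂ);
     (Real.sqrt (p * (1 - p)) : ℂ), (p : ℂ)]

/-- The Holevo-χ-capacity–achieving pure input state `χ₋(p)`. -/
noncomputable def χMinus (p : ℝ) : Matrix (Fin 2) (Fin 2) ℂ :=
  !![(1 - p : ℂ), (-(Real.sqrt (p * (1 - p))) : ℂ);
     (-(Real.sqrt (p * (1 - p))) : ℂ), (p : ℂ)]

/-! The amplitude damping channel multiplies the off-diagonal entries of a state by `√(1 - γ)`,
so `N_γ(χ₊(p)) - N_γ(χ₋(p)) = 2 √((1 - γ) p (1 - p)) σₓ`. Writing `Λ₁ = 1 - Λ₀`, the average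
success probability is `1/2 + √((1 - γ) p (1 - p)) · Re Tr(Λ₀ σₓ)`, and `0 ≤ Λ₀ ≤ 1` gives
`Re Tr(Λ₀ σₓ) ≤ 1`. The strict inequality is `p (1 - p) < 1/4` for `p ≠ 1/2`. -/

def pauliX : Matrix (Fin 2) (Fin 2) ℂ := !![0, 1; 1, 0]

lemma ADC_sub (γ : ℝ) (ρ σ : Matrix (Fin 2) (Fin 2) ℂ) :
    ADC γ (ρ - σ) = ADC γ ρ - ADC γ σ := by
  simp only [ADC, mul_sub, sub_mul]
  abel

lemma ADC_smul (γ : ℝ) (c : ℂ) (ρ : Matrix (Fin 2) (Fin 2) ℂ) :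
    ADC γ (c • ρ) = c • ADC γ ρ := by
  simp only [ADC, Matrix.mul_smul, Matrix.smul_mul, smul_add]

lemma ADC_pauliX (γ : ℝ) : ADC γ pauliX = (Real.sqrt (1 - γ) : ℂ) • pauliX := by
  ext i j
  fin_cases i <;> fin_cases j <;> simp [ADC, K₀, K₁, pauliX, vecMul, dotProduct, Fin.sum_univ_two]

lemma conjTranspose_mul_self_K₀_add_K₁ (γ : ℝ) (hγ0 : 0 ≤ γ) (hγ1 : γ ≤ 1) :
    (K₀ γ)ᴴ * K₀ γ + (K₁ γ)ᴴ * K₁ γ = 1 := by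
  ext i j; fin_cases i <;> fin_cases j <;>
    simp [K₀, K₁, mul_apply, Fin.sum_univ_two, ← ofReal_mul, Real.mul_self_sqrt hγ0,
      Real.mul_self_sqrt (sub_nonneg.2 hγ1)]

lemma trace_ADC (γ : ℝ) (hγ0 : 0 ≤ γ) (hγ1 : γ ≤ 1) (ρ : Matrix (Fin 2) (Fin 2) ℂ) :
    (ADC γ ρ).trace = ρ.trace := by
  rw [ADC, trace_add, Matrix.mul_assoc, trace_mul_comm, Matrix.mul_assoc (K₁ γ),
    trace_mul_comm (K₁ γ), ← trace_add, Matrix.mul_assoc, Matrix.mul_assoc, ← Matrix.mul_add,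
    conjTranspose_mul_self_K₀_add_K₁ γ hγ0 hγ1, Matrix.mul_one]

lemma trace_χMinus (p : ℝ) : (χMinus p).trace = 1 := by
  simp [χMinus, trace_fin_two]

lemma χPlus_sub_χMinus (p : ℝ) :
    χPlus p - χMinus p = ((2 * Real.sqrt (p * (1 - p)) : ℝ) : ℂ) • pauliX := by
  ext i j; fin_cases i <;> fin_cases j <;> simp [χPlus, χMinus, pauliX, two_mul]

lemma trace_mul_pauliX (Λ : Matrix (Fin 2) (Fin 2) ℂ) :
    (Λ * pauliX).trace = Λ 0 1 + Λ 1 0 := by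
  simp [pauliX, trace_fin_two, mul_apply, Fin.sum_univ_two]

lemma re_trace_mul_pauliX_le_one {Λ : Matrix (Fin 2) (Fin 2) ℂ} (hΛ : Λ.PosSemidef)
    (hΛ' : (1 - Λ).PosSemidef) : (Λ * pauliX).trace.re ≤ 1 := by
  have hminus : 0 ≤ (Λ 0 0).re - (Λ 0 1).re - (Λ 1 0).re + (Λ 1 1).re := by
    have h := (Complex.le_def.mp (hΛ.dotProduct_mulVec_nonneg ![1, -1])).1
    simp [dotProduct, mulVec, Fin.sum_univ_two] at h
    linarith
  have hplus : (Λ 0 0).re + (Λ 0 1).re + (Λ 1 0).re + (Λ 1 1).re ≤ 2 := by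
    have h := (Complex.le_def.mp (hΛ'.dotProduct_mulVec_nonneg ![1, 1])).1
    simp [dotProduct, mulVec, Fin.sum_univ_two, Matrix.one_apply] at h
    linarith
  rw [trace_mul_pauliX, add_re]
  linarith

lemma re_trace_mul_add_re_trace_mul_of_add_eq_one {n : Type*} [Fintype n] [DecidableEq n]
    {Λ₀ Λ₁ : Matrix n n ℂ} (h : Λ₀ + Λ₁ = 1) (A B : Matrix n n ℂ) :
    (Λ₀ * A).trace.re + (Λ₁ * B).trace.re = B.trace.re + (Λ₀ * (A - B)).trace.re := by
  rw [eq_sub_of_add_eq' h, Matrix.sub_mul, Matrix.one_mul, Matrix.mul_sub, trace_sub, trace_sub,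
    sub_re, sub_re]
  ring

lemma sqrt_mul_one_sub_lt_half {p : ℝ} (hp : p ≠ 1 / 2) : Real.sqrt (p * (1 - p)) < 1 / 2 := by
  rw [Real.sqrt_lt' one_half_pos]
  nlinarith [sq_pos_of_ne_zero (sub_ne_zero.mpr hp)]

lemma ADC_χPlus_sub_ADC_χMinus (γ p : ℝ) :
    ADC γ (χPlus p) - ADC γ (χMinus p)
      = ((2 * (Real.sqrt (1 - γ) * Real.sqrt (p * (1 - p))) : ℝ) : ℂ) • pauliX := by
  rw [← ADC_sub, χPlus_sub_χMinus, ADC_smul, ADC_pauliX, smul_smul]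
  push_cast
  ring_nf

theorem stmt4_general (γ : ℝ) (hγ0 : 0 ≤ γ) (hγ1 : γ < 1)
    (p : ℝ) :
    (∀ Λ₀ Λ₁ : Matrix (Fin 2) (Fin 2) ℂ,
      Λ₀.PosSemidef → Λ₁.PosSemidef → Λ₀ + Λ₁ = 1 →
      (1/2) * (Λ₀ * ADC γ (χPlus p)).trace.re + (1/2) * (Λ₁ * ADC γ (χMinus p)).trace.re
        ≤ 1/2 + Real.sqrt ((1 - γ) * p * (1 - p))) ∧
    (p ≠ 1/2 →
      1/2 + Real.sqrt ((1 - γ) * p * (1 - p)) < (1 + Real.sqrt (1 - γ)) / 2) := by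
  have hsqrt :
      Real.sqrt ((1 - γ) * p * (1 - p)) = Real.sqrt (1 - γ) * Real.sqrt (p * (1 - p)) := by
    rw [mul_assoc, Real.sqrt_mul (by linarith)]
  rw [hsqrt]
  refine ⟨fun Λ₀ Λ₁ hΛ₀ hΛ₁ hsum => ?_, fun hp => ?_⟩
  · have hΛ₀_le_one := re_trace_mul_pauliX_le_one hΛ₀ (eq_sub_of_add_eq' hsum ▸ hΛ₁)
    have hc : 0 ≤ Real.sqrt (1 - γ) * Real.sqrt (p * (1 - p)) := by positivity
    calc _ = ((ADC γ (χMinus p)).trace.re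
              + (Λ₀ * (ADC γ (χPlus p) - ADC γ (χMinus p))).trace.re) / 2 := by
            rw [← re_trace_mul_add_re_trace_mul_of_add_eq_one hsum]; ring
      _ = 1 / 2 + Real.sqrt (1 - γ) * Real.sqrt (p * (1 - p)) * (Λ₀ * pauliX).trace.re := by
            rw [trace_ADC γ hγ0 hγ1.le, trace_χMinus, ADC_χPlus_sub_ADC_χMinus, Matrix.mul_smul,
              trace_smul, smul_eq_mul, re_ofReal_mul, one_re]
            ring
      _ ≤ _ := add_le_add_right (mul_le_of_le_one_right hc hΛ₀_le_one) _
  · have := mul_lt_mul_of_pos_left (sqrt_mul_one_sub_lt_half hp)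
      (Real.sqrt_pos.2 (sub_pos.2 hγ1))
    linarith

/-- For `γ ∈ [0,1)` and `p ∈ (0,1)`, with inputs `χ₊(p)`, `χ₋(p)`, every
two-outcome POVM has average success probability at most `1/2 + √((1−γ)p(1−p))`; moreover,
if `p ≠ 1/2` this value is strictly below the optimum `(1 + √(1−γ))/2`, so the
χ-capacity-achieving states are strictly suboptimal. -/
theorem stmt4 (γ : ℝ) (hγ0 : 0 ≤ γ) (hγ1 : γ < 1)
    (p : ℝ) (hp0 : 0 < p) (hp1 : p < 1) :
    (∀ Λ₀ Λ₁ : Matrix (Fin 2) (Fin 2) ℂ,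
      Λ₀.PosSemidef → Λ₁.PosSemidef → Λ₀ + Λ₁ = 1 →
      (1/2) * (Λ₀ * ADC γ (χPlus p)).trace.re + (1/2) * (Λ₁ * ADC γ (χMinus p)).trace.re
        ≤ 1/2 + Real.sqrt ((1 - γ) * p * (1 - p))) ∧
    (p ≠ 1/2 →
      1/2 + Real.sqrt ((1 - γ) * p * (1 - p)) < (1 + Real.sqrt (1 - γ)) / 2) :=
  stmt4_general γ hγ0 hγ1 p
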